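/- arXiv:2108.00102 — 2 statements merged into one kernel-verified Lean document; each statement's English description precedes it below -/
import Mathlib

section
/- Let R be a finite simple graph with no isolated vertices. Then there exists a collection 𝒰 of vertex-disjoint connected subgraphs of R such that: (1) every vertex of R belongs to exactly one subgraph of 𝒰; (2) every subgraph in 𝒰 contains at least 2 vertices; and (3) every subgraph in 𝒰 has hop (unweighted) diameter at most 4. -/
/-!
Take a maximal matching `M` of `R`. By maximality every edge of `R` meets a matched vertex, so
every unmatched vertex (which has a neighbour, as `R` has no isolated vertices) is adjacent to
some matched pair; attach it to one such pair. Each part then consists of an edge `ab` together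
with neighbours of `a` or `b`, so every vertex of the part is within distance `2` of `a`, and the
part has diameter at most `4`.
-/

namespace SimpleGraph

variable {V : Type*} (R : SimpleGraph V)

/-- A matching, encoded by the vertex sets `{a, b}` of its edges. -/
def IsPairMatching (M : Set (Set V)) : Prop :=
  (∀ p ∈ M, ∃ a b, R.Adj a b ∧ p = {a, b}) ∧ M.PairwiseDisjoint id

theorem exists_isPairMatching_forall_adj_exists_mem [Finite V] :
    ∃ M, R.IsPairMatching M ∧ ∀ ⦃a b⦄, R.Adj a b → ∃ p ∈ M, a ∈ p ∨ b ∈ p := by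
  obtain ⟨M, hM, hmax⟩ := Set.Finite.exists_maximalFor id {M | R.IsPairMatching M}
    (Set.toFinite _) ⟨∅, by simp, by simp⟩
  refine ⟨M, hM, fun a b hab => ?_⟩
  by_contra! hfree
  have hext : R.IsPairMatching (insert {a, b} M) := by
    refine ⟨?_, hM.2.insert fun q hq _ => ?_⟩
    · rintro p (rfl | hp)
      exacts [⟨a, b, hab, rfl⟩, hM.1 p hp]
    · rw [Set.disjoint_left]
      rintro x (rfl | rfl) hxq
      exacts [(hfree q hq).1 hxq, (hfree q hq).2 hxq]
  have hab_mem : {a, b} ∈ M := hmax hext (Set.subset_insert _ _) (Set.mem_insert _ _)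
  exact (hfree _ hab_mem).1 (Set.mem_insert _ _)

variable {R}

theorem connected_and_dist_le_of_forall_walk_length_le {c : V} {k : ℕ}
    (h : ∀ x, ∃ w : R.Walk x c, w.length ≤ k) : R.Connected ∧ ∀ x y, R.dist x y ≤ 2 * k := by
  refine ⟨R.connected_iff_exists_forall_reachable.2 ⟨c, fun x => ?_⟩, fun x y => ?_⟩
  · obtain ⟨w, -⟩ := h x
    exact w.reachable.symm
  · obtain ⟨wx, hwx⟩ := h x
    obtain ⟨wy, hwy⟩ := h y
    calc R.dist x y ≤ (wx.append wy.reverse).length := dist_le _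
      _ ≤ 2 * k := by rw [Walk.length_append, Walk.length_reverse]; omega

theorem induce_connected_and_two_le_ncard_and_dist_le_four [Finite V] {S : Set V} {a b : V}
    (hab : R.Adj a b) (ha : a ∈ S) (hb : b ∈ S)
    (hS : ∀ x ∈ S, ∃ u ∈ ({a, b} : Set V), x = u ∨ R.Adj x u) :
    (R.induce S).Connected ∧ 2 ≤ S.ncard ∧ ∀ x y : S, (R.induce S).dist x y ≤ 4 := by
  let A : S := ⟨a, ha⟩
  let B : S := ⟨b, hb⟩
  have hBA : (R.induce S).Adj B A := hab.symm
  have hwalk : ∀ x : S, ∃ w : (R.induce S).Walk x A, w.length ≤ 2 := by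
    intro x
    obtain ⟨u, rfl | rfl, hxu | hxu⟩ := hS x x.2
    · obtain rfl : x = A := Subtype.ext hxu
      exact ⟨.nil, by simp⟩
    · exact ⟨Walk.cons (show (R.induce S).Adj x A from hxu) .nil, by simp⟩
    · obtain rfl : x = B := Subtype.ext hxu
      exact ⟨hBA.toWalk, by simp⟩
    · exact ⟨Walk.cons (show (R.induce S).Adj x B from hxu) hBA.toWalk, by simp⟩
  obtain ⟨hconn, hdist⟩ := connected_and_dist_le_of_forall_walk_length_le hwalk
  refine ⟨hconn, ?_, hdist⟩
  calc 2 = ({a, b} : Set V).ncard := (Set.ncard_pair hab.ne).symm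
    _ ≤ S.ncard := Set.ncard_le_ncard (Set.insert_subset ha (Set.singleton_subset_iff.2 hb))

theorem IsPairMatching.exists_assignment {M : Set (Set V)} (hM : R.IsPairMatching M)
    (hdom : ∀ v, ∃ p ∈ M, v ∈ p ∨ ∃ u ∈ p, R.Adj v u) :
    ∃ part : V → Set V, (∀ v, part v ∈ M) ∧ (∀ p ∈ M, ∀ v ∈ p, part v = p) ∧
      ∀ v, v ∈ part v ∨ ∃ u ∈ part v, R.Adj v u := by
  have hchoice : ∀ v, ∃ p ∈ M, (v ∈ ⋃₀ M → v ∈ p) ∧ (v ∈ p ∨ ∃ u ∈ p, R.Adj v u) := by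
    intro v
    by_cases hv : v ∈ ⋃₀ M
    · obtain ⟨p, hp, hvp⟩ := hv
      exact ⟨p, hp, fun _ => hvp, .inl hvp⟩
    · obtain ⟨p, hp, hvp⟩ := hdom v
      exact ⟨p, hp, fun h => absurd h hv, hvp⟩
  choose part hpartM hmatched hnear using hchoice
  refine ⟨part, hpartM, fun p hp v hvp => ?_, hnear⟩
  by_contra hne
  exact Set.disjoint_left.mp (hM.2 (hpartM v) hp hne) (hmatched v ⟨p, hp, hvp⟩) hvp

end SimpleGraph

open SimpleGraph

/-- Any finite simple graph with no isolated vertices admits a partition of its vertex set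
into connected induced subgraphs, each with at least 2 vertices and hop diameter at most 4. -/
theorem stmt2 {V : Type*} [Fintype V] (R : SimpleGraph V) (hiso : ∀ v, ∃ u, R.Adj v u) :
    ∃ 𝒰 : Set (Set V),
      (∀ v : V, ∃! S, S ∈ 𝒰 ∧ v ∈ S) ∧
      (∀ S ∈ 𝒰, (R.induce S).Connected ∧ 2 ≤ S.ncard ∧
        ∀ x y : S, (R.induce S).dist x y ≤ 4) := by
  obtain ⟨M, hM, hcover⟩ := R.exists_isPairMatching_forall_adj_exists_mem
  have hdom : ∀ v, ∃ p ∈ M, v ∈ p ∨ ∃ u ∈ p, R.Adj v u := fun v => by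
    obtain ⟨u, hvu⟩ := hiso v
    obtain ⟨p, hp, hvp | hup⟩ := hcover hvu
    exacts [⟨p, hp, .inl hvp⟩, ⟨p, hp, .inr ⟨u, hup, hvu⟩⟩]
  obtain ⟨part, hpartM, hpart_self, hnear⟩ := hM.exists_assignment hdom
  refine ⟨(Setoid.ker part).classes, (Setoid.isPartition_classes _).2, fun S hS => ?_⟩
  obtain ⟨y, rfl⟩ := hS
  obtain ⟨a, b, hab, hy⟩ := hM.1 _ (hpartM y)
  have hfiber : {x | Setoid.ker part x y} = {x | part x = {a, b}} :=
    Set.ext fun x => Setoid.ker_def.trans (by rw [hy]; rfl)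
  have hpair : ∀ v ∈ ({a, b} : Set V), part v = {a, b} := hpart_self _ (hy ▸ hpartM y)
  rw [hfiber]
  refine induce_connected_and_two_le_ncard_and_dist_le_four hab (hpair a (.inl rfl))
    (hpair b (.inr rfl)) fun x (hx : part x = {a, b}) => ?_
  rcases hnear x with hxp | ⟨u, hup, hxu⟩
  exacts [⟨x, hx ▸ hxp, .inl rfl⟩, ⟨u, hx ▸ hup, .inr hxu⟩]
end

section
/- Let P be a weighted path graph in which every edge and every vertex has weight at most δ, and suppose the augmented diameter of P (total weight of all edges and vertices) is at least D. Then P can be partitioned into vertex-disjoint subpaths, each of augmented diameter at least D' and at most 2D' + 3δ, for any D' with δ < D' ≤ D/2. -/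
/-!
Cut the path greedily from the left: a block ends at the first vertex at which its augmented
weight reaches `D'`. Since a single vertex weighs at most `δ < D'`, the block has at least two
vertices, and removing its last vertex and edge drops it below `D'`, so it weighs less than
`D' + 2δ`. If the rest of the path is heavier than `2D' + 3δ`, then after this block and the
edge leaving it at least `D'` remains and we recurse; otherwise the rest is the last block.
-/

open Finset

/-- The augmented weight of the subpath on the vertices `a, …, b - 1`, where `e i` is the weight
of the edge between `i` and `i + 1`. -/
noncomputable def augmentedWeight (v e : ℕ → ℝ) (a b : ℕ) : ℝ :=
  (∑ i ∈ Ico a b, v i) + ∑ i ∈ Ico a (b - 1), e i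

section augmentedWeight

variable (v e : ℕ → ℝ)

theorem augmentedWeight_split {a b N : ℕ} (hab : a < b) (hbN : b < N) :
    augmentedWeight v e a N = augmentedWeight v e a b + e (b - 1) + augmentedWeight v e b N := by
  unfold augmentedWeight
  rw [← sum_Ico_consecutive v hab.le hbN.le,
    ← sum_Ico_consecutive e (show a ≤ b - 1 by omega) (show b - 1 ≤ N - 1 by omega),
    sum_eq_sum_Ico_succ_bot (show b - 1 < N - 1 by omega), Nat.sub_add_cancel (by omega)]
  ring

theorem augmentedWeight_succ_self (a : ℕ) : augmentedWeight v e a (a + 1) = v a := by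
  simp [augmentedWeight]

theorem augmentedWeight_succ {a b : ℕ} (hab : a < b) :
    augmentedWeight v e a (b + 1) = augmentedWeight v e a b + e (b - 1) + v b := by
  rw [augmentedWeight_split v e hab b.lt_succ_self, augmentedWeight_succ_self]

end augmentedWeight

inductive IntervalPartition (P : ℕ → ℕ → Prop) : ℕ → ℕ → Prop
  | single {a N : ℕ} : a < N → P a N → IntervalPartition P a N
  | cons {a b N : ℕ} : a < b → P a b → IntervalPartition P b N → IntervalPartition P a N

theorem IntervalPartition.exists_cuts {P : ℕ → ℕ → Prop} {a N : ℕ}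
    (h : IntervalPartition P a N) :
    ∃ (m : ℕ) (c : ℕ → ℕ), 0 < m ∧ c 0 = a ∧ c m = N ∧
      (∀ j < m, c j < c (j + 1)) ∧ ∀ j < m, P (c j) (c (j + 1)) := by
  induction h with
  | @single a N haN hP =>
    exact ⟨1, fun j => if j = 0 then a else N, one_pos, rfl, rfl,
      fun j hj => by simpa [Nat.lt_one_iff.mp hj], fun j hj => by simpa [Nat.lt_one_iff.mp hj]⟩
  | @cons a b N hab hP _ ih =>
    obtain ⟨m, c, -, rfl, hcm, hlt, hPc⟩ := ih
    refine ⟨m + 1, fun | 0 => a | j + 1 => c j, m.succ_pos, rfl, hcm, ?_, ?_⟩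
    · rintro (_ | j) hj
      exacts [hab, hlt j (by omega)]
    · rintro (_ | j) hj
      exacts [hP, hPc j (by omega)]

section greedy

variable {v e : ℕ → ℝ} {δ D' : ℝ} {N : ℕ}

theorem exists_first_cut (hv : ∀ i < N, v i ≤ δ) (he : ∀ i, i + 1 < N → e i ≤ δ)
    (hD' : δ < D') {a : ℕ} (haN : a < N) (hW : D' ≤ augmentedWeight v e a N) :
    ∃ b, a < b ∧ b ≤ N ∧ D' ≤ augmentedWeight v e a b ∧
      augmentedWeight v e a b ≤ D' + 2 * δ := by
  classical
  have hex : ∃ b, a < b ∧ D' ≤ augmentedWeight v e a b := ⟨N, haN, hW⟩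
  obtain ⟨hab, hDb⟩ := Nat.find_spec hex
  have hbN : Nat.find hex ≤ N := Nat.find_min' hex ⟨haN, hW⟩
  obtain ⟨c, hc⟩ : ∃ c, Nat.find hex = c + 1 := Nat.exists_eq_succ_of_ne_zero (by omega)
  have hac : a < c := by
    by_contra hca
    have hcb : c = a := by omega
    rw [hc, hcb, augmentedWeight_succ_self] at hDb
    linarith [hv a haN]
  have hWc : augmentedWeight v e a c < D' :=
    not_le.mp fun h => Nat.find_min hex (show c < Nat.find hex by omega) ⟨hac, h⟩
  refine ⟨Nat.find hex, hab, hbN, hDb, ?_⟩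
  rw [hc, augmentedWeight_succ v e hac]
  linarith [hv c (by omega), he (c - 1) (by omega)]

theorem intervalPartition_of_le_augmentedWeight (hv : ∀ i < N, v i ≤ δ)
    (he : ∀ i, i + 1 < N → e i ≤ δ) (hδ : 0 ≤ δ) (hD' : δ < D') (a : ℕ) (haN : a < N)
    (hW : D' ≤ augmentedWeight v e a N) :
    IntervalPartition (fun x y => D' ≤ augmentedWeight v e x y ∧
      augmentedWeight v e x y ≤ 2 * D' + 3 * δ) a N := by
  by_cases hlast : augmentedWeight v e a N ≤ 2 * D' + 3 * δ
  · exact .single haN ⟨hW, hlast⟩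
  rw [not_le] at hlast
  obtain ⟨b, hab, hbN_le, hDb, hbD⟩ := exists_first_cut hv he hD' haN hW
  have hbN : b < N := by
    refine hbN_le.lt_of_ne ?_
    rintro rfl
    linarith
  have hrest : D' ≤ augmentedWeight v e b N := by
    linarith [augmentedWeight_split v e hab hbN, he (b - 1) (by omega)]
  exact .cons hab ⟨hDb, by linarith⟩
    (intervalPartition_of_le_augmentedWeight hv he hδ hD' b hbN hrest)
termination_by N - a

end greedy

/-- Greedy partition of a weighted path (vertex weights `v i`, edge weights `e i`, all at
most `δ`, with augmented diameter at least `D`) into consecutive subpaths, each of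
augmented weight at least `D'` and at most `2D' + 3δ`, for any `δ < D' ≤ D/2`. -/
theorem stmt12 (n : ℕ) (δ D D' : ℝ) (hδ : 0 < δ)
    (v : ℕ → ℝ) (e : ℕ → ℝ)
    (hv : ∀ i ≤ n, 0 ≤ v i ∧ v i ≤ δ) (he : ∀ i < n, 0 ≤ e i ∧ e i ≤ δ)
    (hD : D ≤ (∑ i ∈ Finset.range (n + 1), v i) + ∑ i ∈ Finset.range n, e i)
    (hD'l : δ < D') (hD'u : D' ≤ D / 2) :
    ∃ (m : ℕ) (c : ℕ → ℕ), 0 < m ∧ c 0 = 0 ∧ c m = n + 1 ∧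
      (∀ j < m, c j < c (j + 1)) ∧
      ∀ j < m,
        D' ≤ (∑ i ∈ Finset.Ico (c j) (c (j + 1)), v i) +
              (∑ i ∈ Finset.Ico (c j) (c (j + 1) - 1), e i) ∧
        (∑ i ∈ Finset.Ico (c j) (c (j + 1)), v i) +
              (∑ i ∈ Finset.Ico (c j) (c (j + 1) - 1), e i) ≤ 2 * D' + 3 * δ := by
  have hwhole : augmentedWeight v e 0 (n + 1) =
      (∑ i ∈ range (n + 1), v i) + ∑ i ∈ range n, e i := by
    simp only [augmentedWeight, range_eq_Ico, Nat.add_sub_cancel]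
  have hstart : D' ≤ augmentedWeight v e 0 (n + 1) := by linarith
  exact (intervalPartition_of_le_augmentedWeight (fun i hi => (hv i (by omega)).2)
    (fun i hi => (he i (by omega)).2) hδ.le hD'l 0 n.succ_pos hstart).exists_cuts
end
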